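/- arXiv:2411.06955 — 7 statements merged into one kernel-verified Lean document; each statement's English description precedes it below -/
import Mathlib

section
/- Let v ≥ 1, N ≥ 2, and let Q_0, …, Q_{N−1} be subsets of Z_v, each of size w, such that |Q_i ∩ (Q_i + δ)| ≤ λ_a for all i and all δ ≠ 0, and |Q_i ∩ (Q_j + δ)| ≤ λ_c for all i ≠ j and all δ ∈ Z_v. Then N·w² − w ≤ (v − 1)·λ_a + (N − 1)·v·λ_c. (Consequently, when w² ≠ v·λ_c, one obtains the lower bound N ≥ (v(λ_c − λ_a) − w + λ_a)/(vλ_c − w²) on the size of a (v,w,λ_a,λ_c)-OOC.) -/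
theorem stmt_4 {v N w lam_a lam_c : ℕ} (hv : 1 ≤ v) (hN : 2 ≤ N)
    (Q : Fin N → Finset (ZMod v)) (hw : ∀ i, (Q i).card = w)
    (ha : ∀ i, ∀ δ : ZMod v, δ ≠ 0 → ((Q i) ∩ (Q i).image (· + δ)).card ≤ lam_a)
    (hc : ∀ i j, i ≠ j → ∀ δ : ZMod v, ((Q i) ∩ (Q j).image (· + δ)).card ≤ lam_c) :
    N * w ^ 2 - w ≤ (v - 1) * lam_a + (N - 1) * v * lam_c := by
  haveI : NeZero v := ⟨by omega⟩
  set i0 : Fin N := ⟨0, by omega⟩ with hi0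
  -- key: for any j, the total correlation over all shifts is w^2
  have key : ∀ j, ∑ δ : ZMod v, ((Q i0) ∩ (Q j).image (· + δ)).card = w * w := by
    intro j
    have h1 : ∀ δ : ZMod v, ((Q i0) ∩ (Q j).image (· + δ)).card
        = ∑ x ∈ Q i0, if x - δ ∈ Q j then 1 else 0 := by
      intro δ
      rw [← Finset.filter_mem_eq_inter, Finset.card_filter]
      refine Finset.sum_congr rfl fun x hx => ?_
      congr 1
      simp only [Finset.mem_image, eq_iff_iff]
      constructor
      · rintro ⟨a, haQ, rfl⟩; simpa using haQ
      · intro h; exact ⟨x - δ, h, by ring⟩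
    calc ∑ δ : ZMod v, ((Q i0) ∩ (Q j).image (· + δ)).card
        = ∑ δ : ZMod v, ∑ x ∈ Q i0, if x - δ ∈ Q j then 1 else 0 :=
          Finset.sum_congr rfl fun δ _ => h1 δ
      _ = ∑ x ∈ Q i0, ∑ δ : ZMod v, if x - δ ∈ Q j then 1 else 0 := Finset.sum_comm
      _ = ∑ x ∈ Q i0, (Q j).card := by
          refine Finset.sum_congr rfl fun x hx => ?_
          rw [← Finset.card_filter]
          have : (Finset.univ.filter fun δ : ZMod v => x - δ ∈ Q j)
              = (Q j).image (fun q => x - q) := by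
            ext δ
            simp only [Finset.mem_filter, Finset.mem_univ, true_and, Finset.mem_image]
            constructor
            · intro h; exact ⟨x - δ, h, by ring⟩
            · rintro ⟨q, hq, rfl⟩; simpa using hq
          rw [this, Finset.card_image_of_injective _ (sub_right_injective)]
      _ = w * w := by rw [hw, Finset.sum_const, hw, smul_eq_mul]
  have total : ∑ j : Fin N, ∑ δ : ZMod v, ((Q i0) ∩ (Q j).image (· + δ)).card = N * w ^ 2 := by
    calc ∑ j : Fin N, ∑ δ : ZMod v, ((Q i0) ∩ (Q j).image (· + δ)).card
        = ∑ _j : Fin N, w * w := Finset.sum_congr rfl fun j _ => key j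
      _ = N * w ^ 2 := by
          rw [Finset.sum_const, Finset.card_univ, Fintype.card_fin, smul_eq_mul, pow_two]
  -- bound for the diagonal term
  have bound0 : ∑ δ : ZMod v, ((Q i0) ∩ (Q i0).image (· + δ)).card ≤ w + (v - 1) * lam_a := by
    rw [← Finset.sum_erase_add _ _ (Finset.mem_univ (0 : ZMod v))]
    have h0 : ((Q i0) ∩ (Q i0).image (· + (0 : ZMod v))).card = w := by
      simp [hw]
    have hrest : ∑ δ ∈ Finset.univ.erase (0 : ZMod v),
        ((Q i0) ∩ (Q i0).image (· + δ)).card ≤ (v - 1) * lam_a := by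
      calc ∑ δ ∈ Finset.univ.erase (0 : ZMod v), ((Q i0) ∩ (Q i0).image (· + δ)).card
          ≤ ∑ _δ ∈ Finset.univ.erase (0 : ZMod v), lam_a :=
            Finset.sum_le_sum fun δ hδ => ha i0 δ (Finset.ne_of_mem_erase hδ)
        _ = (v - 1) * lam_a := by
            rw [Finset.sum_const, Finset.card_erase_of_mem (Finset.mem_univ _),
              Finset.card_univ, ZMod.card, smul_eq_mul]
    rw [h0]; omega
  -- bound for off-diagonal terms
  have boundc : ∀ j, j ≠ i0 → ∑ δ : ZMod v, ((Q i0) ∩ (Q j).image (· + δ)).card ≤ v * lam_c := by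
    intro j hj
    calc ∑ δ : ZMod v, ((Q i0) ∩ (Q j).image (· + δ)).card
        ≤ ∑ _δ : ZMod v, lam_c := Finset.sum_le_sum fun δ _ => hc i0 j (fun h => hj h.symm) δ
      _ = v * lam_c := by rw [Finset.sum_const, Finset.card_univ, ZMod.card, smul_eq_mul]
  have main : N * w ^ 2 ≤ w + (v - 1) * lam_a + (N - 1) * (v * lam_c) := by
    rw [← total, ← Finset.sum_erase_add _ _ (Finset.mem_univ i0)]
    have hrest : ∑ j ∈ Finset.univ.erase i0, ∑ δ : ZMod v,
        ((Q i0) ∩ (Q j).image (· + δ)).card ≤ (N - 1) * (v * lam_c) := by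
      calc ∑ j ∈ Finset.univ.erase i0, ∑ δ : ZMod v, ((Q i0) ∩ (Q j).image (· + δ)).card
          ≤ ∑ _j ∈ Finset.univ.erase i0, v * lam_c :=
            Finset.sum_le_sum fun j hj => boundc j (Finset.ne_of_mem_erase hj)
        _ = (N - 1) * (v * lam_c) := by
            rw [Finset.sum_const, Finset.card_erase_of_mem (Finset.mem_univ _),
              Finset.card_univ, Fintype.card_fin, smul_eq_mul]
    omega
  have : (N - 1) * v * lam_c = (N - 1) * (v * lam_c) := mul_assoc _ _ _
  rw [this, Nat.sub_le_iff_le_add]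
  linarith
end

section
/- Let v, w be positive integers with w ∣ v, v ∣ w², and w ≤ v, and set λ_c = w²/v. Define subsets of Z_v by X = {0, 1, …, w − 1} and Y = {δ·w + j : 0 ≤ δ ≤ v/w − 1, 0 ≤ j ≤ λ_c − 1}. Then |X| = |Y| = w and for every s ∈ Z_v, |X ∩ (Y + s)| ≤ λ_c. Hence {X, Y} is a (v, w, w, w²/v)-OOC meeting the lower bound λ_c = w²/v on the cross-correlation value. -/
/-!
Reduction modulo `w`, the ring map `ZMod v → ZMod w` (available since `w ∣ v`), is injective on
`X = {0, …, w - 1}` and sends each element `δ w + j` of `Y` to `j`. It therefore maps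
`X ∩ (Y + s)` injectively into the translate by `s mod w` of `{0, …, λ_c - 1}`, a set of at
most `λ_c` elements.
-/

open Finset

namespace ZMod

theorem natCast_injOn_range {n k : ℕ} (hk : k ≤ n) :
    Set.InjOn (Nat.cast : ℕ → ZMod n) (range k) := by
  intro a ha b hb hab
  simp only [coe_range, Set.mem_Iio] at ha hb
  rwa [natCast_eq_natCast_iff', Nat.mod_eq_of_lt (ha.trans_le hk),
    Nat.mod_eq_of_lt (hb.trans_le hk)] at hab

theorem card_image_natCast_range {n k : ℕ} (hk : k ≤ n) :
    ((range k).image (Nat.cast : ℕ → ZMod n)).card = k := by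
  rw [card_image_of_injOn (natCast_injOn_range hk), card_range]

end ZMod

theorem Nat.mul_add_injOn {w : ℕ} :
    Set.InjOn (fun p : ℕ × ℕ => p.1 * w + p.2) {p | p.2 < w} := by
  intro p hp q hq hpq
  have hw : 0 < w := (Nat.zero_le _).trans_lt hp
  have key (r : ℕ × ℕ) (hr : r.2 < w) :
      (r.1 * w + r.2) / w = r.1 ∧ (r.1 * w + r.2) % w = r.2 :=
    (Nat.div_mod_unique hw).2 ⟨by ring, hr⟩
  obtain ⟨hp1, hp2⟩ := key p hp
  obtain ⟨hq1, hq2⟩ := key q hq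
  simp only at hpq
  exact Prod.ext (hp1.symm.trans (hpq ▸ hq1)) (hp2.symm.trans (hpq ▸ hq2))

namespace ZMod

theorem card_image_mul_add {n m l w : ℕ} (hlw : l ≤ w) (hmw : m * w ≤ n) :
    ((range m ×ˢ range l).image (fun p => ((p.1 * w + p.2 : ℕ) : ZMod n))).card = m * l := by
  rw [card_image_of_injOn, card_product, card_range, card_range]
  refine (natCast_injOn_range hmw).comp (Nat.mul_add_injOn.mono ?_) ?_
  · intro p hp
    simp only [coe_product, coe_range, Set.mem_prod, Set.mem_Iio] at hp
    exact hp.2.trans_le hlw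
  · intro p hp
    simp only [coe_product, coe_range, Set.mem_prod, Set.mem_Iio] at hp ⊢
    rw [mul_comm]
    exact Nat.mul_add_lt_mul_of_lt_of_lt hp.1 (hp.2.trans_le hlw)

theorem card_image_castHom_image_mul_add_le {n m l w : ℕ} (hwn : w ∣ n) :
    (((range m ×ˢ range l).image (fun p => ((p.1 * w + p.2 : ℕ) : ZMod n))).image
      (castHom hwn (ZMod w))).card ≤ l := by
  calc _ ≤ ((range l).image (Nat.cast : ℕ → ZMod w)).card := by
        refine card_le_card ?_
        simp only [image_image, subset_iff, mem_image, mem_product, mem_range]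
        rintro _ ⟨p, ⟨-, hp⟩, rfl⟩
        exact ⟨p.2, hp, by rw [Function.comp_apply, map_natCast]; simp⟩
    _ ≤ l := card_image_le.trans (card_range l).le

theorem card_image_natCast_range_inter_le {n w : ℕ} (hwn : w ∣ n) (T : Finset (ZMod n)) :
    ((range w).image (Nat.cast : ℕ → ZMod n) ∩ T).card ≤
      (T.image (castHom hwn (ZMod w))).card := by
  refine card_le_card_of_injOn _ (fun z hz => mem_image_of_mem _ (mem_inter.1 hz).2) ?_
  intro a ha b hb hab
  simp only [coe_inter, coe_image, Set.mem_inter_iff, Set.mem_image] at ha hb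
  obtain ⟨⟨i, hi, rfl⟩, -⟩ := ha
  obtain ⟨⟨j, hj, rfl⟩, -⟩ := hb
  simp only [map_natCast] at hab
  rw [natCast_injOn_range le_rfl hi hj hab]

end ZMod

theorem stmt_5 {v w : ℕ} (hw : 0 < w) (hwv : w ∣ v) (hvw : v ∣ w ^ 2) (hle : w ≤ v) :
    ((Finset.range w).image (fun k : ℕ => (k : ZMod v))).card = w ∧
    (((Finset.range (v / w)) ×ˢ (Finset.range (w ^ 2 / v))).image
        (fun p => ((p.1 * w + p.2 : ℕ) : ZMod v))).card = w ∧
    ∀ s : ZMod v,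
      (((Finset.range w).image (fun k : ℕ => (k : ZMod v))) ∩
        ((((Finset.range (v / w)) ×ˢ (Finset.range (w ^ 2 / v))).image
          (fun p => ((p.1 * w + p.2 : ℕ) : ZMod v))).image (· + s))).card ≤ w ^ 2 / v := by
  have hblocks : v / w * (w ^ 2 / v) = w := by
    rw [Nat.div_mul_div_comm hwv hvw, show v * w ^ 2 = w * v * w by ring,
      Nat.mul_div_cancel_left _ (Nat.mul_pos hw (hw.trans_le hle))]
  have hlw : w ^ 2 / v ≤ w := Nat.le_of_dvd hw (Dvd.intro_left _ hblocks)
  refine ⟨ZMod.card_image_natCast_range hle,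
    by rw [ZMod.card_image_mul_add hlw (Nat.div_mul_cancel hwv).le, hblocks], fun s => ?_⟩
  set Y := (range (v / w) ×ˢ range (w ^ 2 / v)).image
    (fun p => ((p.1 * w + p.2 : ℕ) : ZMod v))
  set f := ZMod.castHom hwv (ZMod w)
  have htranslate : (Y.image (· + s)).image f = (Y.image f).image (· + f s) := by
    simp only [image_image, Function.comp_def, map_add]
  calc _ ≤ ((Y.image (· + s)).image f).card := ZMod.card_image_natCast_range_inter_le hwv _
    _ ≤ (Y.image f).card := htranslate ▸ card_image_le
    _ ≤ w ^ 2 / v := ZMod.card_image_castHom_image_mul_add_le hwv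
end

section
/- Let Q_0, …, Q_{N−1} be w-subsets of Z_v and let λ ≥ 1. The following are equivalent: (1) for every nonzero x ∈ Z_v, there is at most one index i with Q_i ∩ (Q_i + x) nonempty, and |Q_i ∩ (Q_i + x)| ≤ λ for every i (that is, the family is a (v,w,λ)-scarce difference family); (2) |Q_i ∩ (Q_i + δ)| ≤ λ for all i and all δ ≠ 0, and |Q_i ∩ (Q_j + δ)| ≤ 1 for all i ≠ j and all δ ∈ Z_v (that is, the family is a (v,w,λ,1)-OOC). -/
theorem stmt_9 {v w N lam : ℕ} (hlam : 1 ≤ lam) (Q : Fin N → Finset (ZMod v))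
    (hcard : ∀ i, (Q i).card = w) :
    (∀ x : ZMod v, x ≠ 0 →
        (∀ i j, ((Q i) ∩ (Q i).image (· + x)).Nonempty →
          ((Q j) ∩ (Q j).image (· + x)).Nonempty → i = j) ∧
        (∀ i, ((Q i) ∩ (Q i).image (· + x)).card ≤ lam)) ↔
      ((∀ i, ∀ δ : ZMod v, δ ≠ 0 → ((Q i) ∩ (Q i).image (· + δ)).card ≤ lam) ∧
       (∀ i j, i ≠ j → ∀ δ : ZMod v, ((Q i) ∩ (Q j).image (· + δ)).card ≤ 1)) := by
  constructor
  · intro H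
    refine ⟨fun i δ hδ => (H δ hδ).2 i, ?_⟩
    intro i j hij δ
    by_contra hc
    push_neg at hc
    obtain ⟨a, ha, b, hb, hab⟩ := Finset.one_lt_card.mp hc
    simp only [Finset.mem_inter, Finset.mem_image] at ha hb
    obtain ⟨haQ, q, hq, hqa⟩ := ha
    obtain ⟨hbQ, q', hq', hqb⟩ := hb
    have hx : a - b ≠ 0 := sub_ne_zero.mpr hab
    apply hij
    refine (H (a - b) hx).1 i j ⟨a, ?_⟩ ⟨q, ?_⟩
    · simp only [Finset.mem_inter, Finset.mem_image]
      exact ⟨haQ, b, hbQ, by ring⟩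
    · simp only [Finset.mem_inter, Finset.mem_image]
      refine ⟨hq, q', hq', ?_⟩
      have : a - b = q - q' := by
        rw [← hqa, ← hqb]; ring
      rw [this]; ring
  · rintro ⟨A, C⟩ x hx
    refine ⟨?_, fun i => A i x hx⟩
    intro i j hi hj
    by_contra hij
    obtain ⟨a, ha⟩ := hi
    obtain ⟨c, hc⟩ := hj
    simp only [Finset.mem_inter, Finset.mem_image] at ha hc
    obtain ⟨haQ, b, hbQ, hba⟩ := ha
    obtain ⟨hcQ, d, hdQ, hdc⟩ := hc
    have h2 : 1 < ((Q i) ∩ (Q j).image (· + (a - c))).card := by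
      refine Finset.one_lt_card.mpr ⟨a, ?_, b, ?_, ?_⟩
      · simp only [Finset.mem_inter, Finset.mem_image]
        exact ⟨haQ, c, hcQ, by ring⟩
      · simp only [Finset.mem_inter, Finset.mem_image]
        refine ⟨hbQ, d, hdQ, ?_⟩
        have : b = a - x := by rw [← hba]; ring
        have hd : d = c - x := by rw [← hdc]; ring
        rw [this, hd]; ring
      · intro hab
        apply hx
        have : b + x = b := by rw [hba, hab]
        linear_combination this
    exact absurd (C i j hij (a - c)) (by omega)
end

section
/- Let Q_0, …, Q_{N−1} be pairwise disjoint w-subsets of Z_v (N ≥ 2) such that for every index i and every nonzero δ ∈ Z_v, Σ_{j ≠ i} |Q_i ∩ (Q_j + δ)| = λ (that is, the family is a (v,N,w,λ)-strong external difference family in Z_v). Then for all i ≠ j and all δ ∈ Z_v (including δ = 0), |Q_i ∩ (Q_j + δ)| ≤ λ; that is, the family satisfies the cross-correlation condition of a (v,w,λ_a,λ)-OOC. -/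
theorem stmt_10 {v w N lam : ℕ} (hN : 2 ≤ N) (Q : Fin N → Finset (ZMod v))
    (hcard : ∀ i, (Q i).card = w)
    (hdisj : ∀ i j, i ≠ j → Disjoint (Q i) (Q j))
    (hsedf : ∀ i, ∀ δ : ZMod v, δ ≠ 0 →
      ∑ j ∈ Finset.univ.erase i, ((Q i) ∩ (Q j).image (· + δ)).card = lam) :
    ∀ i j, i ≠ j → ∀ δ : ZMod v, ((Q i) ∩ (Q j).image (· + δ)).card ≤ lam := by
  intro i j hij δ
  by_cases hδ : δ = 0
  · subst hδ
    have himg : (Q j).image (· + (0 : ZMod v)) = Q j := by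
      simp
    rw [himg, Finset.disjoint_iff_inter_eq_empty.mp (hdisj i j hij), Finset.card_empty]
    exact Nat.zero_le _
  · rw [← hsedf i δ hδ]
    exact Finset.single_le_sum (f := fun k => ((Q i) ∩ (Q k).image (· + δ)).card) (fun _ _ => Nat.zero_le _)
      (Finset.mem_erase.mpr ⟨hij.symm, Finset.mem_univ j⟩)
end

section
/- Let v ≥ 1 and let Q and Q' be subsets of Z_v with |Q| = |Q'| = w such that |Q ∩ (Q' + δ)| ≤ λ_c for every δ ∈ Z_v. If moreover w² = λ_c·v, then |Q ∩ (Q' + δ)| = λ_c for every δ ∈ Z_v. Hence in a c-proper (v,w,λ_a,λ_c)-OOC with λ_c = w²/v, every pair of codeword-sets has cross-correlation value exactly λ_c at every shift. -/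
theorem stmt_17 {v w lam_c : ℕ} (hv : 1 ≤ v) (Q Q' : Finset (ZMod v))
    (hQ : Q.card = w) (hQ' : Q'.card = w)
    (hc : ∀ δ : ZMod v, (Q ∩ Q'.image (· + δ)).card ≤ lam_c)
    (heq : w ^ 2 = lam_c * v) :
    ∀ δ : ZMod v, (Q ∩ Q'.image (· + δ)).card = lam_c := by
  haveI : NeZero v := ⟨Nat.one_le_iff_ne_zero.mp hv⟩
  -- total sum over all shifts equals w^2
  have hsum : ∑ δ : ZMod v, (Q ∩ Q'.image (· + δ)).card = w ^ 2 := by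
    have hstep : ∀ δ : ZMod v,
        (Q ∩ Q'.image (· + δ)).card = (Q'.filter (fun q' => q' + δ ∈ Q)).card := by
      intro δ
      rw [← Finset.card_image_of_injective (Q'.filter (fun q' => q' + δ ∈ Q))
        (add_left_injective δ)]
      congr 1
      ext x
      simp only [Finset.mem_inter, Finset.mem_image, Finset.mem_filter]
      constructor
      · rintro ⟨hx, y, hy, rfl⟩; exact ⟨y, ⟨hy, hx⟩, rfl⟩
      · rintro ⟨y, ⟨hy, hx⟩, rfl⟩; exact ⟨hx, y, hy, rfl⟩
    calc ∑ δ : ZMod v, (Q ∩ Q'.image (· + δ)).card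
        = ∑ δ : ZMod v, ∑ q' ∈ Q', if q' + δ ∈ Q then 1 else 0 := by
          simp only [hstep, Finset.card_filter]
      _ = ∑ q' ∈ Q', ∑ δ : ZMod v, if q' + δ ∈ Q then 1 else 0 := Finset.sum_comm
      _ = ∑ q' ∈ Q', Q.card := by
          refine Finset.sum_congr rfl fun q' _ => ?_
          rw [← Finset.card_filter]
          refine Finset.card_bij (fun δ _ => q' + δ) ?_ ?_ ?_
          · intro δ hδ; simpa using (Finset.mem_filter.mp hδ).2
          · intro a ha b hb hab; exact add_left_cancel hab
          · intro b hb; exact ⟨b - q', by simpa using hb, by ring⟩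
      _ = w ^ 2 := by simp [hQ, hQ']; ring
  -- each term attains the bound
  intro δ
  by_contra hne
  have hlt : (Q ∩ Q'.image (· + δ)).card < lam_c := lt_of_le_of_ne (hc δ) hne
  have : ∑ δ : ZMod v, (Q ∩ Q'.image (· + δ)).card < ∑ _δ : ZMod v, lam_c :=
    Finset.sum_lt_sum (fun i _ => hc i) ⟨δ, Finset.mem_univ δ, hlt⟩
  rw [hsum, Finset.sum_const, Finset.card_univ, ZMod.card, smul_eq_mul, mul_comm] at this
  omega
end

section
/- Let Q and Q' be w-subsets of Z_v, let n be an integer with 2 ≤ n ≤ w, and suppose there exists γ ∈ Z_v with |Q ∩ (Q' + γ)| ≥ n. Then the multiset intersection Δ(Q) ∩ Δ(Q') has cardinality at least n(n−1); that is, Σ_{δ ≠ 0} min(|Q ∩ (Q + δ)|, |Q' ∩ (Q' + δ)|) ≥ n(n−1). (Contrapositive: if the multiset intersection Δ(Q_i) ∩ Δ(Q_j) has fewer than n(n−1) elements for all pairs of codeword-sets of an OOC, then λ_c < n.) -/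
theorem stmt_18 {v w n : ℕ} [NeZero v] (Q Q' : Finset (ZMod v))
    (hQ : Q.card = w) (hQ' : Q'.card = w) (hn2 : 2 ≤ n) (hnw : n ≤ w)
    (γ : ZMod v) (hγ : n ≤ (Q ∩ Q'.image (· + γ)).card) :
    n * (n - 1) ≤ ∑ δ ∈ Finset.univ.erase (0 : ZMod v),
      min ((Q ∩ Q.image (· + δ)).card) ((Q' ∩ Q'.image (· + δ)).card) := by
  set S := Q ∩ Q'.image (· + γ) with hS
  have hSQ : S ⊆ Q := Finset.inter_subset_left
  have key : ∀ δ : ZMod v, (S ∩ S.image (· + δ)).card ≤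
      min ((Q ∩ Q.image (· + δ)).card) ((Q' ∩ Q'.image (· + δ)).card) := by
    intro δ
    refine le_min ?_ ?_
    · exact Finset.card_le_card
        (Finset.inter_subset_inter hSQ (Finset.image_subset_image hSQ))
    · have hinj : Function.Injective (fun x : ZMod v => x - γ) :=
        fun a b h => by simpa using congrArg (· + γ) h
      have hTQ' : S.image (· - γ) ⊆ Q' := by
        intro x hx
        simp only [Finset.mem_image] at hx
        obtain ⟨a, ha, rfl⟩ := hx
        have : a ∈ Q'.image (· + γ) := (Finset.mem_inter.mp ha).2
        obtain ⟨b, hb, rfl⟩ := Finset.mem_image.mp this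
        simpa using hb
      have hcard : (S ∩ S.image (· + δ)).card
          = ((S.image (· - γ)) ∩ (S.image (· - γ)).image (· + δ)).card := by
        rw [← Finset.card_image_of_injective (S ∩ S.image (· + δ)) hinj]
        congr 1
        rw [Finset.image_inter _ _ hinj, Finset.image_image, Finset.image_image]
        congr 1
        ext y
        simp [Finset.mem_image, sub_add_eq_add_sub]
      rw [hcard]
      exact Finset.card_le_card
        (Finset.inter_subset_inter hTQ' (Finset.image_subset_image hTQ'))
  have hmem : ∀ (δ a : ZMod v), a ∈ S.image (· + δ) ↔ a - δ ∈ S := by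
    intro δ a
    simp only [Finset.mem_image]
    constructor
    · rintro ⟨b, hb, rfl⟩; simpa using hb
    · intro h; exact ⟨a - δ, h, by simp⟩
  have hfilt : ∀ δ : ZMod v, S ∩ S.image (· + δ) = S.filter (fun a => a - δ ∈ S) := by
    intro δ
    ext a
    simp [Finset.mem_filter, hmem δ a, and_comm, sub_eq_add_neg]
  have htot : ∑ δ : ZMod v, (S ∩ S.image (· + δ)).card = S.card * S.card := by
    calc ∑ δ : ZMod v, (S ∩ S.image (· + δ)).card
        = ∑ δ : ZMod v, ∑ a ∈ S, if a - δ ∈ S then 1 else 0 := by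
          simp only [hfilt, Finset.card_filter]
      _ = ∑ a ∈ S, ∑ δ : ZMod v, if a - δ ∈ S then 1 else 0 := Finset.sum_comm
      _ = ∑ a ∈ S, S.card := by
          refine Finset.sum_congr rfl fun a _ => ?_
          have he : (∑ δ : ZMod v, if a - δ ∈ S then 1 else 0)
              = ∑ δ : ZMod v, if δ ∈ S then 1 else 0 :=
            Fintype.sum_equiv (Equiv.subLeft a) _ _ (fun x => rfl)
          rw [he]
          simp [Finset.sum_ite_mem]
      _ = S.card * S.card := by simp [mul_comm]
  have h0 : (S ∩ S.image (· + (0 : ZMod v))).card = S.card := by simp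
  have hsplit := Finset.add_sum_erase Finset.univ
    (fun δ : ZMod v => (S ∩ S.image (· + δ)).card) (Finset.mem_univ 0)
  have herase : ∑ δ ∈ Finset.univ.erase (0 : ZMod v), (S ∩ S.image (· + δ)).card
      = S.card * S.card - S.card := by
    omega
  have hfin : n * (n - 1) ≤ ∑ δ ∈ Finset.univ.erase (0 : ZMod v),
      (S ∩ S.image (· + δ)).card := by
    rw [herase]
    have h1 : S.card * S.card - S.card = S.card * (S.card - 1) := by
      rw [Nat.mul_sub, mul_one]
    rw [h1]
    exact Nat.mul_le_mul hγ (Nat.sub_le_sub_right hγ 1)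
  calc n * (n - 1) ≤ _ := hfin
    _ ≤ _ := Finset.sum_le_sum fun δ _ => key δ
end

section
/- Let p be a prime, let Q and Q' be w-subsets of Z_p, let n be an integer with 2 ≤ n ≤ w and n < (p+1)/2, and suppose there exists γ ∈ Z_p with |Q ∩ (Q' + γ)| ≥ n. Then the set of common nonzero internal differences, {δ ∈ Z_p : δ ≠ 0, Q ∩ (Q + δ) ≠ ∅ and Q' ∩ (Q' + δ) ≠ ∅}, has at least 2n − 2 elements. (This follows from the Cauchy–Davenport theorem applied to the n-subset D = Q ∩ (Q' + γ): the difference set D − D has at least 2n − 1 elements, of which all but 0 are common internal differences of Q and Q'.) -/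
open Finset Pointwise

theorem stmt_19 {p : ℕ} [NeZero p] (hp : p.Prime) {w n : ℕ} (Q Q' : Finset (ZMod p))
    (hQ : Q.card = w) (hQ' : Q'.card = w) (hn2 : 2 ≤ n) (hnw : n ≤ w)
    (hnp : n < (p + 1) / 2) (γ : ZMod p) (hγ : n ≤ (Q ∩ Q'.image (· + γ)).card) :
    2 * n - 2 ≤ (Finset.univ.filter (fun δ : ZMod p =>
      δ ≠ 0 ∧ (Q ∩ Q.image (· + δ)).Nonempty ∧ (Q' ∩ Q'.image (· + δ)).Nonempty)).card := by
  classical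
  set D := Q ∩ Q'.image (· + γ) with hD
  have hDne : D.Nonempty := Finset.card_pos.mp (lt_of_lt_of_le (by omega) hγ)
  have hcd : min p (D.card + D.card - 1) ≤ (D - D).card := by
    have h := ZMod.cauchy_davenport hp hDne hDne.neg
    rw [Finset.card_neg] at h
    rw [sub_eq_add_neg]
    omega
  have hbig : 2 * n - 1 ≤ (D - D).card := le_trans (by omega) hcd
  have hsub : (D - D).erase 0 ⊆ Finset.univ.filter (fun δ : ZMod p =>
      δ ≠ 0 ∧ (Q ∩ Q.image (· + δ)).Nonempty ∧ (Q' ∩ Q'.image (· + δ)).Nonempty) := by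
    intro δ hδ
    obtain ⟨hδ0, hδD⟩ := Finset.mem_erase.mp hδ
    obtain ⟨a, ha, b, hb, hab⟩ := Finset.mem_sub.mp hδD
    obtain ⟨haQ, haI⟩ := Finset.mem_inter.mp ha
    obtain ⟨hbQ, hbI⟩ := Finset.mem_inter.mp hb
    obtain ⟨a', ha', ha'e⟩ := Finset.mem_image.mp haI
    obtain ⟨b', hb', hb'e⟩ := Finset.mem_image.mp hbI
    refine Finset.mem_filter.mpr ⟨Finset.mem_univ _, hδ0, ⟨a, Finset.mem_inter.mpr ⟨haQ, ?_⟩⟩,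
      ⟨a', Finset.mem_inter.mpr ⟨ha', ?_⟩⟩⟩
    · exact Finset.mem_image.mpr ⟨b, hbQ, by rw [← hab]; ring⟩
    · refine Finset.mem_image.mpr ⟨b', hb', ?_⟩
      have : a' - b' = δ := by
        have : (a' + γ) - (b' + γ) = δ := by rw [ha'e, hb'e, hab]
        linear_combination this
      linear_combination -this
  have := Finset.card_le_card hsub
  have herase : (D - D).card - 1 ≤ ((D - D).erase 0).card := by
    by_cases h : (0 : ZMod p) ∈ D - D
    · rw [Finset.card_erase_of_mem h]
    · rw [Finset.erase_eq_of_notMem h]; omega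
  omega
end
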